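/- Let t ≥ 1 be a natural number and let G be any finite simple graph on 2^(t+2) - 1 vertices in which exactly one vertex has degree 2^(t+2) - 2, for each integer i with 1 ≤ i ≤ t exactly 2^(t-i+1) vertices have degree 2^i + 1, and exactly 2^(t+1) vertices have degree t + 1. Then for every integer i with 1 ≤ i ≤ t and 2^i > t, the number N_i of vertices of degree at least 2^i + 1 satisfies the two-sided power-law bound 2^(t+2) - 1 ≤ 2^(i+1) · N_i and 2^i · N_i ≤ 2^(t+2) - 1; that is, the cumulative fraction of vertices of degree at least 2^i + 1 lies between 2^(-(i+1)) and 2^(-i), so the cumulative degree distribution decays like k^(-1) and G has power-law degree exponent γ = 2. -/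
import Mathlib

private lemma sum_pow2_ico (n : ℕ) : ∀ a : ℕ,
    ∑ j ∈ Finset.Ico a (a + n), 2 ^ (a + n - j) = 2 ^ (n + 1) - 2 := by
  induction n with
  | zero => intro a; simp
  | succ n ih =>
    intro a
    rw [show a + (n + 1) = (a + n) + 1 by ring,
      Finset.sum_Ico_succ_top (by omega)]
    have h1 : ∑ j ∈ Finset.Ico a (a + n), 2 ^ (a + n + 1 - j)
        = ∑ j ∈ Finset.Ico a (a + n), 2 * 2 ^ (a + n - j) := by
      apply Finset.sum_congr rfl
      intro j hj
      simp only [Finset.mem_Ico] at hj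
      rw [show a + n + 1 - j = (a + n - j) + 1 by omega, pow_succ]
      ring
    rw [h1, ← Finset.mul_sum, ih a, show a + n + 1 - (a + n) = 1 by omega]
    have h2 : 2 ^ 1 ≤ 2 ^ (n + 1) := Nat.pow_le_pow_right (by norm_num) (by omega)
    have h3 : 2 ^ (n + 1 + 1) = 2 * 2 ^ (n + 1) := by rw [pow_succ]; ring
    omega

/-- For any finite simple graph with the degree sequence of the paper's graph
`G*_t` (`t ≥ 1`), for each `1 ≤ i ≤ t` with `2^i > t`, the number `N_i` of
vertices of degree at least `2^i + 1` satisfies the two-sided power-law bound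
`2^(t+2) - 1 ≤ 2^(i+1) * N_i` and `2^i * N_i ≤ 2^(t+2) - 1`: the cumulative
fraction of vertices of degree at least `2^i + 1` lies between `2^(-(i+1))` and
`2^(-i)`, so the graph has power-law exponent `γ = 2`. -/
theorem cumulative_degree_power_law_bounds {V : Type*} [Fintype V]
    (t : ℕ) (ht : 1 ≤ t)
    (G : SimpleGraph V) [DecidableRel G.Adj]
    (hcard : Fintype.card V = 2 ^ (t + 2) - 1)
    (htop : (Finset.univ.filter (fun v : V => G.degree v = 2 ^ (t + 2) - 2)).card = 1)
    (hmid : ∀ i : ℕ, 1 ≤ i → i ≤ t →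
      (Finset.univ.filter (fun v : V => G.degree v = 2 ^ i + 1)).card = 2 ^ (t - i + 1))
    (hbot : (Finset.univ.filter (fun v : V => G.degree v = t + 1)).card = 2 ^ (t + 1)) :
    ∀ i : ℕ, 1 ≤ i → i ≤ t → 2 ^ i > t →
      2 ^ (t + 2) - 1
          ≤ 2 ^ (i + 1) * (Finset.univ.filter (fun v : V => 2 ^ i + 1 ≤ G.degree v)).card ∧
      2 ^ i * (Finset.univ.filter (fun v : V => 2 ^ i + 1 ≤ G.degree v)).card
          ≤ 2 ^ (t + 2) - 1 := by
  classical
  intro i hi1 hit hpow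
  -- Degenerate case: if `2^j = t` for some admissible `j`, hypotheses are contradictory.
  by_cases hbad : ∃ j, 1 ≤ j ∧ j ≤ t ∧ 2 ^ j = t
  · exfalso
    obtain ⟨j, hj1, hjt, hjeq⟩ := hbad
    have h1 := hmid j hj1 hjt
    have h2 : (Finset.univ.filter (fun v : V => G.degree v = 2 ^ j + 1))
        = (Finset.univ.filter (fun v : V => G.degree v = t + 1)) := by
      apply Finset.filter_congr
      intro v _
      simp [hjeq]
    rw [h2, hbot] at h1
    have h3 := Nat.pow_right_injective (le_refl 2) h1
    omega
  push_neg at hbad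
  set D : ℕ → Finset V := fun k => Finset.univ.filter (fun v : V => G.degree v = 2 ^ k + 1)
    with hD
  set A : Finset V := Finset.univ.filter (fun v : V => G.degree v = 2 ^ (t + 2) - 2) with hA
  set B : Finset V := Finset.univ.filter (fun v : V => G.degree v = t + 1) with hB
  set N : Finset V := Finset.univ.filter (fun v : V => 2 ^ i + 1 ≤ G.degree v) with hN
  have hpowmono : ∀ j k : ℕ, j ≤ k → (2:ℕ) ^ j ≤ 2 ^ k :=
    fun j k h => Nat.pow_le_pow_right (by norm_num) h
  have h2t : (2:ℕ) ≤ 2 ^ t := hpowmono 1 t ht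
  have h4t : (2:ℕ) ^ (t + 2) = 4 * 2 ^ t := by ring
  -- pairwise disjointness of the middle classes
  have hDdisj : ∀ j k : ℕ, j ≠ k → Disjoint (D j) (D k) := by
    intro j k hjk
    simp only [hD, Finset.disjoint_left, Finset.mem_filter, Finset.mem_univ, true_and]
    intro v h1 h2
    exact hjk (Nat.pow_right_injective (le_refl 2) (show (2:ℕ) ^ j = 2 ^ k by omega))
  -- LOWER BOUND: A ∪ ⋃_{j=i}^{t} D j ⊆ N
  have hADdisj : ∀ j ∈ Finset.Ico i (t + 1), Disjoint A (D j) := by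
    intro j hj
    simp only [Finset.mem_Ico] at hj
    have hjle : (2:ℕ) ^ j ≤ 2 ^ t := hpowmono j t (by omega)
    simp only [hA, hD, Finset.disjoint_left, Finset.mem_filter, Finset.mem_univ, true_and]
    intro v h1 h2
    omega
  have hScard : (A ∪ (Finset.Ico i (t + 1)).biUnion D).card = 2 ^ (t - i + 2) - 1 := by
    rw [Finset.card_union_of_disjoint ((Finset.disjoint_biUnion_right _ _ _).mpr hADdisj),
      Finset.card_biUnion (fun j _ k _ h => hDdisj j k h), htop]
    have hsum : ∑ j ∈ Finset.Ico i (t + 1), (D j).card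
        = ∑ j ∈ Finset.Ico i (t + 1), 2 ^ (t + 1 - j) := by
      apply Finset.sum_congr rfl
      intro j hj
      simp only [Finset.mem_Ico] at hj
      simp only [hD]
      rw [hmid j (by omega) (by omega), show t - j + 1 = t + 1 - j by omega]
    rw [hsum]
    have hs := sum_pow2_ico (t + 1 - i) i
    rw [show i + (t + 1 - i) = t + 1 by omega] at hs
    rw [hs, show t + 1 - i + 1 = t - i + 2 by omega]
    have h2 : 2 ^ 1 ≤ 2 ^ (t - i + 2) := hpowmono 1 _ (by omega)
    omega
  have hSsub : A ∪ (Finset.Ico i (t + 1)).biUnion D ⊆ N := by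
    intro v hv
    simp only [Finset.mem_union, Finset.mem_biUnion, Finset.mem_Ico, hA, hD, hN,
      Finset.mem_filter, Finset.mem_univ, true_and] at hv ⊢
    have hile : (2:ℕ) ^ i ≤ 2 ^ t := hpowmono i t hit
    rcases hv with h | ⟨j, hj, h⟩
    · omega
    · have : (2:ℕ) ^ i ≤ 2 ^ j := hpowmono i j hj.1
      omega
  have hlow : 2 ^ (t - i + 2) - 1 ≤ N.card := by
    rw [← hScard]; exact Finset.card_le_card hSsub
  -- UPPER BOUND via the complement
  have hcompl : N.card + (Finset.univ.filter (fun v : V => ¬ (2 ^ i + 1 ≤ G.degree v))).card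
      = 2 ^ (t + 2) - 1 := by
    rw [hN, Finset.card_filter_add_card_filter_not, Finset.card_univ, hcard]
  have hBDdisj : ∀ j ∈ Finset.Ico 1 i, Disjoint B (D j) := by
    intro j hj
    simp only [Finset.mem_Ico] at hj
    have hne := hbad j hj.1 (by omega)
    simp only [hB, hD, Finset.disjoint_left, Finset.mem_filter, Finset.mem_univ, true_and]
    intro v h1 h2
    omega
  have hTcard : (B ∪ (Finset.Ico 1 i).biUnion D).card
      = 2 ^ (t + 1) + 2 ^ (t + 1 - i) * (2 ^ i - 2) := by
    rw [Finset.card_union_of_disjoint ((Finset.disjoint_biUnion_right _ _ _).mpr hBDdisj),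
      Finset.card_biUnion (fun j _ k _ h => hDdisj j k h), hbot]
    congr 1
    have hsum : ∑ j ∈ Finset.Ico 1 i, (D j).card
        = ∑ j ∈ Finset.Ico 1 i, 2 ^ (t + 1 - i) * 2 ^ (i - j) := by
      apply Finset.sum_congr rfl
      intro j hj
      simp only [Finset.mem_Ico] at hj
      simp only [hD]
      rw [hmid j hj.1 (by omega), ← pow_add, show t + 1 - i + (i - j) = t - j + 1 by omega]
    rw [hsum, ← Finset.mul_sum]
    congr 1
    have hs := sum_pow2_ico (i - 1) 1
    rw [show 1 + (i - 1) = i by omega] at hs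
    rw [hs, show i - 1 + 1 = i by omega]
  have hTsub : B ∪ (Finset.Ico 1 i).biUnion D
      ⊆ Finset.univ.filter (fun v : V => ¬ (2 ^ i + 1 ≤ G.degree v)) := by
    intro v hv
    simp only [Finset.mem_union, Finset.mem_biUnion, Finset.mem_Ico, hB, hD,
      Finset.mem_filter, Finset.mem_univ, true_and] at hv ⊢
    rcases hv with h | ⟨j, hj, h⟩
    · omega
    · have : (2:ℕ) ^ j < 2 ^ i := Nat.pow_lt_pow_right (by norm_num) hj.2
      omega
  have hup : N.card ≤ 2 ^ (t - i + 2) - 1 := by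
    have hTle := Finset.card_le_card hTsub
    rw [hTcard] at hTle
    have e1 : 2 ^ (t + 1 - i) * 2 ^ i = 2 ^ (t + 1) := by
      rw [← pow_add]; congr 1; omega
    have e2 : 2 ^ (t + 1 - i) * 2 = 2 ^ (t - i + 2) := by
      rw [show t - i + 2 = (t + 1 - i) + 1 by omega, pow_succ]
    have e3 : 2 ^ (t + 1 - i) * (2 ^ i - 2) = 2 ^ (t + 1) - 2 ^ (t - i + 2) := by
      rw [Nat.mul_sub, e1, e2]
    rw [e3] at hTle
    have h5 : (2:ℕ) ^ (t - i + 2) ≤ 2 ^ (t + 1) := hpowmono _ _ (by omega)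
    have h6 : (1:ℕ) ≤ 2 ^ (t - i + 2) := Nat.one_le_two_pow
    have h7 : (2:ℕ) ^ (t + 2) = 2 * 2 ^ (t + 1) := by rw [pow_succ]; ring
    omega
  -- conclusion
  have hNcard : N.card = 2 ^ (t - i + 2) - 1 := le_antisymm hup hlow
  have q1 : (2:ℕ) ≤ 2 ^ (t - i + 2) := hpowmono 1 _ (by omega)
  obtain ⟨m, hm⟩ : ∃ m, (2:ℕ) ^ (t - i + 2) = m + 1 := ⟨2 ^ (t - i + 2) - 1, by omega⟩
  have hNm : N.card = m := by omega
  rw [hNm]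
  constructor
  · have e1 : 2 ^ (i + 1) * (m + 1) = 2 ^ (t + 3) := by
      rw [← hm, ← pow_add]; congr 1; omega
    have e1' : 2 ^ (i + 1) * m + 2 ^ (i + 1) = 2 ^ (t + 3) := by rw [← e1]; ring
    have h1 : (2:ℕ) ^ (i + 1) ≤ 2 ^ (t + 1) := hpowmono _ _ (by omega)
    have h3 : (2:ℕ) ^ (t + 3) = 2 * 2 ^ (t + 2) := by rw [pow_succ]; ring
    have h5 : (2:ℕ) ^ (t + 1) ≤ 2 ^ (t + 2) := hpowmono _ _ (by omega)
    omega
  · have e2 : 2 ^ i * (m + 1) = 2 ^ (t + 2) := by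
      rw [← hm, ← pow_add]; congr 1; omega
    have e2' : 2 ^ i * m + 2 ^ i = 2 ^ (t + 2) := by rw [← e2]; ring
    have h8 : (1:ℕ) ≤ 2 ^ i := Nat.one_le_two_pow
    omega
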